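/- For every real z > 0, lim_{ρ → 1⁻} √(1−ρ²)·L(ρ²·z/(1−ρ²)) = 2·√(z/π). -/

import Mathlib

noncomputable section

/-- Laguerre function `L(z) = L_{1/2}(-z) = ₁F₁(-1/2;1;-z)`. -/
def Lhalf (z : ℝ) : ℝ :=
  ∑' n : ℕ, (ascPochhammer ℝ n).eval (-(1/2)) / ((n.factorial : ℝ))^2 * (-z) ^ n

open Filter

/-!
Expanding `exp (-x cos² θ)` and integrating termwise, Wallis' formula gives
`L(x) = (2/π) ∫₀^{π/2} (1 + 2x sin² θ) exp (-x cos² θ) dθ`.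
The first summand of the integrand contributes at most `π/2`, while the substitutions
`t = cos θ`, `u = √x t` turn `√x ∫₀^{π/2} sin² θ exp (-x cos² θ) dθ` into
`∫₀^∞ √(1 - u²/x) exp (-u²) du`, which tends to `√π/2` by dominated convergence.
Hence `L(x) ~ 2 √(x/π)` as `x → ∞`, and with `x = ρ² z/(1 - ρ²)` one has `√(1 - ρ²) = ρ √z/√x`.
-/

open Real Polynomial Nat Topology Set MeasureTheory

theorem ascPochhammer_eval_neg_half_succ (n : ℕ) :
    (ascPochhammer ℝ (n + 1)).eval (-(1 / 2)) = -(1 / 2) * (ascPochhammer ℝ n).eval (1 / 2) := by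
  rw [ascPochhammer_succ_left, eval_mul, eval_X, eval_comp]
  norm_num

theorem integral_cos_pow_two_mul (n : ℕ) :
    ∫ θ in (0 : ℝ)..π / 2, cos θ ^ (2 * n)
      = π / 2 * (ascPochhammer ℝ n).eval (1 / 2) / n ! := by
  induction n with
  | zero => simp
  | succ n ih =>
    rw [show 2 * (n + 1) = 2 * n + 2 by ring, integral_cos_pow, ih, ascPochhammer_succ_eval,
      factorial_succ, cos_pi_div_two, sin_zero, zero_pow (by omega), zero_mul, mul_zero, sub_self,
      zero_div, zero_add]
    push_cast
    field_simp
    ring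

theorem integral_cos_sq_pow_sub_mul_sin_sq (n : ℕ) :
    ∫ θ in (0 : ℝ)..π / 2, ((cos θ ^ 2) ^ n - 2 * n * sin θ ^ 2 * (cos θ ^ 2) ^ (n - 1))
      = π / 2 * (ascPochhammer ℝ n).eval (-(1 / 2)) / n ! := by
  cases n with
  | zero => simp
  | succ n =>
    have hsplit : ∀ θ, (cos θ ^ 2) ^ (n + 1) - 2 * ↑(n + 1) * sin θ ^ 2 * (cos θ ^ 2) ^ (n + 1 - 1)
        = (2 * n + 3) * cos θ ^ (2 * n + 2) - (2 * n + 2) * cos θ ^ (2 * n) := by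
      intro θ
      rw [sin_sq, ← pow_mul, ← pow_mul, Nat.add_sub_cancel]
      push_cast
      ring
    simp_rw [hsplit]
    rw [intervalIntegral.integral_sub, intervalIntegral.integral_const_mul,
      intervalIntegral.integral_const_mul, integral_cos_pow, integral_cos_pow_two_mul,
      ascPochhammer_eval_neg_half_succ, factorial_succ, cos_pi_div_two, sin_zero,
      zero_pow (by omega), zero_mul, mul_zero, sub_self, zero_div, zero_add]
    · push_cast
      field_simp
      ring
    all_goals exact (by fun_prop : Continuous _).intervalIntegrable _ _

theorem abs_cos_sq_pow_sub_mul_sin_sq_le (n : ℕ) (θ : ℝ) :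
    |(cos θ ^ 2) ^ n - 2 * n * sin θ ^ 2 * (cos θ ^ 2) ^ (n - 1)| ≤ 3 ^ n := by
  have hc : |cos θ ^ 2| ≤ 1 := by rw [abs_of_nonneg (sq_nonneg _)]; exact cos_sq_le_one θ
  have hs : |sin θ ^ 2| ≤ 1 := by rw [abs_of_nonneg (sq_nonneg _)]; exact sin_sq_le_one θ
  have hbernoulli : 1 + (n : ℝ) * 2 ≤ 3 ^ n := by
    simpa [show (1 : ℝ) + 2 = 3 by norm_num] using
      one_add_mul_le_pow (by norm_num : (-2 : ℝ) ≤ 2) n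
  calc |(cos θ ^ 2) ^ n - 2 * n * sin θ ^ 2 * (cos θ ^ 2) ^ (n - 1)|
      ≤ |cos θ ^ 2| ^ n + 2 * n * |sin θ ^ 2| * |cos θ ^ 2| ^ (n - 1) := by
        refine (abs_sub _ _).trans_eq ?_
        simp [abs_mul, abs_pow]
    _ ≤ 1 + 2 * n * 1 * 1 := by gcongr <;> exact pow_le_one₀ (abs_nonneg _) hc
    _ ≤ 3 ^ n := by linarith

/-- The factor `c ^ (n - 1)` is truncated at `n = 0`, where its coefficient `n` vanishes. -/
theorem hasSum_one_add_two_mul_mul_exp_neg_mul (x c s : ℝ) :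
    HasSum (fun n : ℕ => (-x) ^ n / n ! * (c ^ n - 2 * n * s * c ^ (n - 1)))
      ((1 + 2 * x * s) * exp (-(x * c))) := by
  have hexp : HasSum (fun n : ℕ => (-x) ^ n / n ! * c ^ n) (exp (-(x * c))) := by
    rw [exp_eq_exp_ℝ]
    refine (NormedSpace.expSeries_div_hasSum_exp (-(x * c))).congr_fun fun n => ?_
    rw [neg_mul_eq_neg_mul, mul_pow]
    ring
  have hderiv :
      HasSum (fun n : ℕ => (-x) ^ n / n ! * (n * c ^ (n - 1))) (-x * exp (-(x * c))) := by
    rw [← hasSum_nat_add_iff' 1, Finset.sum_range_one]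
    simp only [CharP.cast_eq_zero, zero_mul, mul_zero, sub_zero]
    refine (hexp.mul_left (-x)).congr_fun fun n => ?_
    rw [factorial_succ, pow_succ, Nat.add_sub_cancel]
    push_cast
    field_simp
  rw [show (1 + 2 * x * s) * exp (-(x * c)) = exp (-(x * c)) - 2 * s * (-x * exp (-(x * c))) by
    ring]
  exact (hexp.sub (hderiv.mul_left (2 * s))).congr_fun fun n => by ring

theorem Lhalf_eq_integral (x : ℝ) :
    Lhalf x = 2 / π *
      ∫ θ in (0 : ℝ)..π / 2, (1 + 2 * x * sin θ ^ 2) * exp (-(x * cos θ ^ 2)) := by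
  have htermwise := intervalIntegral.hasSum_integral_of_dominated_convergence (μ := volume)
    (a := 0) (b := π / 2)
    (F := fun n θ =>
      (-x) ^ n / n ! * ((cos θ ^ 2) ^ n - 2 * n * sin θ ^ 2 * (cos θ ^ 2) ^ (n - 1)))
    (fun n _ => (3 * |x|) ^ n / n !)
    (fun n => (by fun_prop : Continuous _).aestronglyMeasurable)
    (fun n => .of_forall fun θ _ => ?_)
    (.of_forall fun _ _ => summable_pow_div_factorial _) intervalIntegrable_const
    (.of_forall fun θ _ => hasSum_one_add_two_mul_mul_exp_neg_mul x (cos θ ^ 2) (sin θ ^ 2))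
  · simp only [intervalIntegral.integral_const_mul, integral_cos_sq_pow_sub_mul_sin_sq]
      at htermwise
    have hcoeff :
        HasSum (fun n : ℕ => (ascPochhammer ℝ n).eval (-(1 / 2)) / (n ! : ℝ) ^ 2 * (-x) ^ n)
          ((∫ θ in (0 : ℝ)..π / 2, (1 + 2 * x * sin θ ^ 2) * exp (-(x * cos θ ^ 2)))
            / (π / 2)) :=
      (htermwise.div_const (π / 2)).congr_fun fun n => by field_simp
    rw [Lhalf, hcoeff.tsum_eq]
    ring
  · rw [norm_mul, norm_div, norm_pow, norm_neg, Real.norm_natCast, Real.norm_eq_abs, mul_pow,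
      mul_comm (3 ^ n), mul_div_right_comm]
    exact mul_le_mul_of_nonneg_left (abs_cos_sq_pow_sub_mul_sin_sq_le n θ) (by positivity)

theorem integral_sin_sq_mul_exp_neg_mul_cos_sq (x : ℝ) :
    ∫ θ in (0 : ℝ)..π / 2, sin θ ^ 2 * exp (-(x * cos θ ^ 2))
      = ∫ t in (0 : ℝ)..1, √(1 - t ^ 2) * exp (-(x * t ^ 2)) := by
  have hsub := intervalIntegral.integral_comp_mul_deriv (a := π / 2) (b := 0)
    (fun θ _ => hasDerivAt_cos θ) continuous_sin.neg.continuousOn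
    (g := fun t => √(1 - t ^ 2) * exp (-(x * t ^ 2))) (by fun_prop)
  rw [cos_pi_div_two, cos_zero] at hsub
  rw [← hsub, intervalIntegral.integral_symm, ← intervalIntegral.integral_neg]
  refine intervalIntegral.integral_congr fun θ hθ => ?_
  rw [uIcc_comm, uIcc_of_le (by positivity)] at hθ
  have hsin : 0 ≤ sin θ := sin_nonneg_of_nonneg_of_le_pi hθ.1 (by linarith [hθ.2, pi_pos])
  simp only [Function.comp_apply, ← sin_sq, sqrt_sq hsin]
  ring

/-- `√(1 - t²)` vanishes for `t ≥ 1`, since Mathlib's `√` is zero on negative numbers. -/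
theorem integral_sqrt_one_sub_sq_mul_exp_eq_integral_Ioi (x : ℝ) :
    ∫ t in (0 : ℝ)..1, √(1 - t ^ 2) * exp (-(x * t ^ 2))
      = ∫ t in Ioi 0, √(1 - t ^ 2) * exp (-(x * t ^ 2)) := by
  rw [intervalIntegral.integral_of_le zero_le_one]
  refine (setIntegral_eq_of_subset_of_forall_sdiff_eq_zero measurableSet_Ioi Ioc_subset_Ioi_self
    fun t ht => ?_).symm
  simp only [Set.mem_sdiff, mem_Ioi, mem_Ioc, not_and, not_le] at ht
  have ht1 := ht.2 ht.1
  rw [sqrt_eq_zero_of_nonpos (by nlinarith), zero_mul]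

theorem sqrt_mul_integral_Ioi_sqrt_one_sub_sq_mul_exp {x : ℝ} (hx : 0 < x) :
    √x * ∫ t in Ioi 0, √(1 - t ^ 2) * exp (-(x * t ^ 2))
      = ∫ u in Ioi 0, √(1 - u ^ 2 / x) * exp (-u ^ 2) := by
  have hsx : 0 < √x := sqrt_pos.2 hx
  have hscale := integral_comp_mul_left_Ioi (fun u => √(1 - u ^ 2 / x) * exp (-u ^ 2)) 0 hsx
  simp only [mul_pow, sq_sqrt hx.le, mul_zero, smul_eq_mul] at hscale
  have hx' : ∫ t in Ioi 0, √(1 - t ^ 2) * exp (-(x * t ^ 2))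
      = (√x)⁻¹ * ∫ u in Ioi 0, √(1 - u ^ 2 / x) * exp (-u ^ 2) := by
    rw [← hscale]
    congr 1 with t
    field_simp
  rw [hx', mul_inv_cancel_left₀ hsx.ne']

theorem tendsto_integral_Ioi_sqrt_one_sub_sq_div_mul_exp :
    Tendsto (fun x : ℝ => ∫ u in Ioi 0, √(1 - u ^ 2 / x) * exp (-u ^ 2)) atTop
      (𝓝 (√π / 2)) := by
  have hgauss : ∫ u in Ioi (0 : ℝ), exp (-u ^ 2) = √π / 2 := by
    simpa using integral_gaussian_Ioi 1
  rw [← hgauss]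
  refine tendsto_integral_filter_of_dominated_convergence (fun u => exp (-u ^ 2))
    (.of_forall fun x => (by fun_prop : Continuous _).aestronglyMeasurable) ?_
    (by simpa using (integrable_exp_neg_mul_sq one_pos).restrict) (.of_forall fun u => ?_)
  · filter_upwards [eventually_ge_atTop 0] with x hx
    refine .of_forall fun u => ?_
    have hu : 0 ≤ u ^ 2 / x := by positivity
    rw [norm_mul, norm_of_nonneg (sqrt_nonneg _), norm_of_nonneg (exp_pos _).le]
    exact mul_le_of_le_one_left (exp_pos _).le (sqrt_le_one.2 (by linarith))
  · have h : Tendsto (fun x : ℝ => √(1 - u ^ 2 / x)) atTop (𝓝 1) := by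
      simpa using ((tendsto_const_nhds.div_atTop tendsto_id).const_sub 1).sqrt
    simpa using h.mul_const (exp (-u ^ 2))

theorem tendsto_sqrt_mul_integral_sin_sq_mul_exp_neg_mul_cos_sq :
    Tendsto (fun x : ℝ => √x * ∫ θ in (0 : ℝ)..π / 2, sin θ ^ 2 * exp (-(x * cos θ ^ 2)))
      atTop (𝓝 (√π / 2)) := by
  refine tendsto_integral_Ioi_sqrt_one_sub_sq_div_mul_exp.congr' ?_
  filter_upwards [eventually_gt_atTop 0] with x hx
  rw [integral_sin_sq_mul_exp_neg_mul_cos_sq, integral_sqrt_one_sub_sq_mul_exp_eq_integral_Ioi,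
    sqrt_mul_integral_Ioi_sqrt_one_sub_sq_mul_exp hx]

theorem tendsto_inv_sqrt_mul_integral_exp_neg_mul_cos_sq :
    Tendsto (fun x : ℝ => (√x)⁻¹ * ∫ θ in (0 : ℝ)..π / 2, exp (-(x * cos θ ^ 2))) atTop
      (𝓝 0) := by
  have hbound : Tendsto (fun x : ℝ => (√x)⁻¹ * (π / 2)) atTop (𝓝 0) := by
    simpa using tendsto_sqrt_atTop.inv_tendsto_atTop.mul_const (π / 2)
  refine squeeze_zero_norm' ?_ hbound
  filter_upwards [eventually_ge_atTop 0] with x hx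
  rw [norm_mul, norm_inv, norm_of_nonneg (sqrt_nonneg x)]
  refine mul_le_mul_of_nonneg_left ?_ (by positivity)
  have hle := intervalIntegral.norm_integral_le_of_norm_le_const (a := 0) (b := π / 2) (C := 1)
    (f := fun θ => exp (-(x * cos θ ^ 2))) fun θ _ => by
      rw [norm_of_nonneg (exp_pos _).le, exp_le_one_iff, neg_nonpos]
      positivity
  simpa [abs_of_pos pi_div_two_pos] using hle

theorem tendsto_inv_sqrt_mul_integral_one_add_two_mul_sin_sq_mul_exp :
    Tendsto (fun x : ℝ => (√x)⁻¹ *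
      ∫ θ in (0 : ℝ)..π / 2, (1 + 2 * x * sin θ ^ 2) * exp (-(x * cos θ ^ 2))) atTop
      (𝓝 √π) := by
  have hlim := tendsto_inv_sqrt_mul_integral_exp_neg_mul_cos_sq.add
    (tendsto_sqrt_mul_integral_sin_sq_mul_exp_neg_mul_cos_sq.const_mul 2)
  rw [zero_add, mul_div_cancel₀ _ two_ne_zero] at hlim
  refine hlim.congr' ?_
  filter_upwards [eventually_gt_atTop 0] with x hx
  have hsplit : ∫ θ in (0 : ℝ)..π / 2, (1 + 2 * x * sin θ ^ 2) * exp (-(x * cos θ ^ 2))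
      = (∫ θ in (0 : ℝ)..π / 2, exp (-(x * cos θ ^ 2)))
        + 2 * x * ∫ θ in (0 : ℝ)..π / 2, sin θ ^ 2 * exp (-(x * cos θ ^ 2)) := by
    rw [← intervalIntegral.integral_const_mul, ← intervalIntegral.integral_add
      ((by fun_prop : Continuous _).intervalIntegrable _ _)
      ((by fun_prop : Continuous _).intervalIntegrable _ _)]
    congr 1 with θ
    ring
  have hx' : (√x)⁻¹ * x = √x := by rw [← div_eq_inv_mul, div_sqrt]
  rw [hsplit]
  linear_combination
    (2 * ∫ θ in (0 : ℝ)..π / 2, sin θ ^ 2 * exp (-(x * cos θ ^ 2))) * hx'.symm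

theorem tendsto_inv_sqrt_mul_Lhalf :
    Tendsto (fun x : ℝ => (√x)⁻¹ * Lhalf x) atTop (𝓝 (2 / √π)) := by
  have hlim := tendsto_inv_sqrt_mul_integral_one_add_two_mul_sin_sq_mul_exp.const_mul (2 / π)
  have hsπ : √π ≠ 0 := (sqrt_pos.2 pi_pos).ne'
  rw [show 2 / π * √π = 2 / √π by
    rw [div_mul_eq_mul_div, div_eq_div_iff pi_ne_zero hsπ, mul_assoc, mul_self_sqrt pi_pos.le]]
    at hlim
  refine hlim.congr fun x => ?_
  rw [Lhalf_eq_integral]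
  ring

theorem tendsto_sq_mul_div_one_sub_sq_nhdsLT_one {z : ℝ} (hz : 0 < z) :
    Tendsto (fun ρ : ℝ => ρ ^ 2 * z / (1 - ρ ^ 2)) (𝓝[<] 1) atTop := by
  have hnum : Tendsto (fun ρ : ℝ => ρ ^ 2 * z) (𝓝[<] 1) (𝓝 z) := by
    simpa using ((by fun_prop : Continuous fun ρ : ℝ => ρ ^ 2 * z).tendsto 1).mono_left
      nhdsWithin_le_nhds
  have hden : Tendsto (fun ρ : ℝ => 1 - ρ ^ 2) (𝓝[<] 1) (𝓝[>] 0) := by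
    refine tendsto_nhdsWithin_iff.2 ⟨?_, ?_⟩
    · simpa using ((by fun_prop : Continuous fun ρ : ℝ => 1 - ρ ^ 2).tendsto 1).mono_left
        nhdsWithin_le_nhds
    · filter_upwards [Ioo_mem_nhdsLT one_pos] with ρ hρ
      simp only [mem_Ioi, sub_pos]
      nlinarith [hρ.1, hρ.2]
  simpa [div_eq_mul_inv] using hnum.pos_mul_atTop hz hden.inv_tendsto_nhdsGT_zero

/-- Perfect-correlation limit: for `z > 0`,
`√(1-ρ²) L(ρ² z/(1-ρ²)) → 2√(z/π)` as `ρ → 1⁻`. -/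
theorem perfect_correlation_limit (z : ℝ) (hz : 0 < z) :
    Tendsto (fun ρ : ℝ => Real.sqrt (1 - ρ ^ 2) * Lhalf (ρ ^ 2 * z / (1 - ρ ^ 2)))
      (nhdsWithin 1 (Set.Iio 1)) (nhds (2 * Real.sqrt (z / Real.pi))) := by
  have hρ : Tendsto (fun ρ : ℝ => ρ * √z) (𝓝[<] 1) (𝓝 √z) := by
    simpa using ((by fun_prop : Continuous fun ρ : ℝ => ρ * √z).tendsto 1).mono_left
      nhdsWithin_le_nhds
  have hlim :=
    hρ.mul (tendsto_inv_sqrt_mul_Lhalf.comp (tendsto_sq_mul_div_one_sub_sq_nhdsLT_one hz))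
  rw [show √z * (2 / √π) = 2 * √(z / π) by rw [sqrt_div hz.le]; ring] at hlim
  refine hlim.congr' ?_
  filter_upwards [Ioo_mem_nhdsLT one_pos] with ρ hρ
  have h1 : 0 < 1 - ρ ^ 2 := by nlinarith [hρ.1, hρ.2]
  have hsqrt : √(ρ ^ 2 * z / (1 - ρ ^ 2)) = ρ * √z / √(1 - ρ ^ 2) := by
    rw [sqrt_div' _ h1.le, sqrt_mul (sq_nonneg ρ), sqrt_sq hρ.1.le]
  have hρ0 : ρ ≠ 0 := hρ.1.ne'
  have hsz : √z ≠ 0 := (sqrt_pos.2 hz).ne'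
  simp only [Function.comp_apply, hsqrt]
  field_simp
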